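/- arXiv:2512.14831 — 5 statements merged into one kernel-verified Lean document; each statement's English description precedes it below -/
import Mathlib

section
/- Let P, Q be real polynomials. Suppose all roots of P are real, and there exists c > 0 with |Q(t)| ≤ c·|P(t)| for all real t. Then Q is a scalar multiple of P; moreover, if deg Q < deg P, then Q = 0. -/
/-!
A bound `|Q| ≤ c |P|` near a root `a` of `P` forces `a` to be a root of `Q` of at least the same
multiplicity. Since `P` splits over `ℝ`, this gives `P ∣ Q`, and the quotient `Q / P` is then
bounded at infinity, hence constant.
-/

open Polynomial Filter Topology Asymptotics

namespace Polynomial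

section NormedField

variable {𝕜 : Type*} [NontriviallyNormedField 𝕜]

lemma eval_mul_inv_pow_eventuallyEq {P R : 𝕜[X]} {a : 𝕜} {k : ℕ} (h : P = (X - C a) ^ k * R) :
    (fun t => P.eval t * ((t - a) ^ k)⁻¹) =ᶠ[𝓝[≠] a] fun t => R.eval t := by
  filter_upwards [self_mem_nhdsWithin] with t ht
  have hta : (t - a) ^ k ≠ 0 := pow_ne_zero k (sub_ne_zero.2 ht)
  rw [h, eval_mul, eval_pow, eval_sub, eval_X, eval_C]
  field_simp

/-- Dividing both sides by `(t - a) ^ n` with `n` the multiplicity of `a` in `Q`, the left side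
tends to the nonzero value `(Q /ₘ (X - C a) ^ n).eval a`, while a higher multiplicity in `P`
would force the right side to tend to `0`. -/
theorem rootMultiplicity_le_of_isBigO {P Q : 𝕜[X]} (hQ : Q ≠ 0) {a : 𝕜}
    (h : (fun t => Q.eval t) =O[𝓝[≠] a] fun t => P.eval t) :
    P.rootMultiplicity a ≤ Q.rootMultiplicity a := by
  by_contra! hlt
  set n := Q.rootMultiplicity a
  obtain ⟨P', hP'⟩ : (X - C a) ^ n * (X - C a) ∣ P :=
    pow_succ (X - C a) n ▸ (pow_dvd_pow _ hlt).trans (pow_rootMultiplicity_dvd P a)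
  have hP_lim : Tendsto (fun t => P.eval t * ((t - a) ^ n)⁻¹) (𝓝[≠] a) (𝓝 0) := by
    refine Tendsto.congr' (eval_mul_inv_pow_eventuallyEq (R := (X - C a) * P')
      (by rw [hP', mul_assoc])).symm ?_
    convert (((X - C a) * P').continuous.tendsto a).mono_left nhdsWithin_le_nhds using 2
    simp
  have hQ_lim : Tendsto (fun t => (Q /ₘ (X - C a) ^ n).eval t) (𝓝[≠] a) (𝓝 0) :=
    ((h.mul (isBigO_refl (fun t => ((t - a) ^ n)⁻¹) _)).congr'
      (eval_mul_inv_pow_eventuallyEq (pow_mul_divByMonic_rootMultiplicity_eq Q a).symm)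
      EventuallyEq.rfl).trans_tendsto hP_lim
  exact eval_divByMonic_pow_rootMultiplicity_ne_zero a hQ <| tendsto_nhds_unique
    (((Q /ₘ (X - C a) ^ n).continuous.tendsto a).mono_left nhdsWithin_le_nhds) hQ_lim

theorem Splits.dvd_of_forall_isBigO {P Q : 𝕜[X]} (hP : P.Splits) (hP0 : P ≠ 0)
    (h : ∀ a, (fun t => Q.eval t) =O[𝓝[≠] a] fun t => P.eval t) : P ∣ Q := by
  classical
  rcases eq_or_ne Q 0 with rfl | hQ
  · exact dvd_zero P
  refine hP.dvd_of_roots_le_roots hP0 (Multiset.le_iff_count.2 fun a => ?_)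
  rw [count_roots, count_roots]
  exact rootMultiplicity_le_of_isBigO hQ (h a)

end NormedField

theorem splits_of_forall_mem_roots_map_complex_im_eq_zero {P : ℝ[X]}
    (h : ∀ z ∈ (P.map (algebraMap ℝ ℂ)).roots, z.im = 0) : P.Splits :=
  Splits.of_splits_map_of_injective (algebraMap ℝ ℂ).injective (IsAlgClosed.splits _)
    fun z hz => ⟨z.re, Complex.ext (by simp) (by simp [h z hz])⟩

theorem exists_eq_smul_of_dvd_of_isBigO_atTop {P Q : ℝ[X]} (hP : P ≠ 0) (hPQ : P ∣ Q)
    (h : (fun t => Q.eval t) =O[atTop] fun t => P.eval t) : ∃ k : ℝ, Q = k • P := by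
  obtain ⟨R, rfl⟩ := hPQ
  obtain ⟨c, hc⟩ := h.bound
  have hR : IsBoundedUnder (· ≤ ·) atTop fun t => |R.eval t| := by
    refine isBoundedUnder_of_eventually_le (a := c) ?_
    filter_upwards [hc, eventually_atTop_not_isRoot P hP] with t ht hPt
    rw [eval_mul, norm_mul, Real.norm_eq_abs, Real.norm_eq_abs] at ht
    exact le_of_mul_le_mul_left (by linarith) (abs_pos.2 hPt)
  refine ⟨R.coeff 0, ?_⟩
  rw [smul_eq_C_mul, mul_comm, ← eq_C_of_degree_le_zero ((isBoundedUnder_abs_atTop_iff R).1 hR)]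

end Polynomial

theorem poly_dominated_by_real_rooted_general {P Q : Polynomial ℝ} (hP : P ≠ 0)
    (hroots : ∀ z ∈ (P.map (algebraMap ℝ ℂ)).roots, z.im = 0)
    (c : ℝ) (hbound : ∀ t : ℝ, |Q.eval t| ≤ c * |P.eval t|) :
    (∃ k : ℝ, Q = k • P) ∧ (Q.degree < P.degree → Q = 0) := by
  have hO : (fun t => Q.eval t) =O[⊤] fun t => P.eval t :=
    IsBigO.of_bound c (Eventually.of_forall hbound)
  have hPQ : P ∣ Q := (splits_of_forall_mem_roots_map_complex_im_eq_zero hroots).dvd_of_forall_isBigO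
    hP fun a => hO.mono le_top
  obtain ⟨k, rfl⟩ := exists_eq_smul_of_dvd_of_isBigO_atTop hP hPQ (hO.mono le_top)
  refine ⟨⟨k, rfl⟩, fun hlt => ?_⟩
  rcases eq_or_ne k 0 with rfl | hk
  · exact zero_smul ℝ P
  · rw [smul_eq_C_mul, degree_C_mul hk] at hlt
    exact absurd hlt (lt_irrefl _)

theorem poly_dominated_by_real_rooted {P Q : Polynomial ℝ} (hP : P ≠ 0)
    (hroots : ∀ z ∈ (P.map (algebraMap ℝ ℂ)).roots, z.im = 0)
    (c : ℝ) (hc : 0 < c) (hbound : ∀ t : ℝ, |Q.eval t| ≤ c * |P.eval t|) :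
    (∃ k : ℝ, Q = k • P) ∧ (Q.degree < P.degree → Q = 0) :=
  poly_dominated_by_real_rooted_general hP hroots c hbound
end

section
/- Let P be a real polynomial all of whose roots are real and nonnegative, and let Q be a real polynomial with |Q(t)| ≤ c·|P(t)| for all t ≥ 0, for some c > 0. Then Q is a scalar multiple of P, and if deg Q < deg P then Q = 0. -/
open Polynomial Filter

private lemma poly_dom_aux : ∀ (n : ℕ) (P Q : Polynomial ℝ), P.natDegree = n → P ≠ 0 →
    (∀ z ∈ (P.map (algebraMap ℝ ℂ)).roots, z.im = 0 ∧ 0 ≤ z.re) →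
    ∀ c : ℝ, 0 < c → (∀ t : ℝ, 0 ≤ t → |Q.eval t| ≤ c * |P.eval t|) →
    ∃ k : ℝ, Q = k • P := by
  intro n
  induction n with
  | zero =>
    intro P Q hdeg hP _ c hc hbound
    obtain ⟨a, ha, hPc⟩ : ∃ a : ℝ, a ≠ 0 ∧ P = C a := by
      refine ⟨P.coeff 0, ?_, eq_C_of_natDegree_eq_zero hdeg⟩
      intro h
      exact hP (by rw [eq_C_of_natDegree_eq_zero hdeg, h, map_zero])
    by_cases hQ0 : Q = 0
    · exact ⟨0, by simp [hQ0]⟩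
    have hQdeg : Q.natDegree = 0 := by
      by_contra hne
      have hpos : 0 < Q.degree := natDegree_pos_iff_degree_pos.mp (Nat.pos_of_ne_zero hne)
      have htend := Q.abs_tendsto_atTop hpos
      obtain ⟨t, ht1, ht2⟩ :=
        ((htend.eventually_gt_atTop (c * |a|)).and (eventually_ge_atTop (0 : ℝ))).exists
      have := hbound t ht2
      rw [hPc] at this
      simp only [eval_C] at this
      linarith
    obtain ⟨b, hQc⟩ : ∃ b : ℝ, Q = C b := ⟨Q.coeff 0, eq_C_of_natDegree_eq_zero hQdeg⟩
    refine ⟨b / a, ?_⟩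
    rw [hQc, hPc, smul_C, smul_eq_mul, div_mul_cancel₀ _ ha]
  | succ n ih =>
    intro P Q hdeg hP hroots c hc hbound
    have hPmapne : P.map (algebraMap ℝ ℂ) ≠ 0 := by
      rw [Polynomial.map_ne_zero_iff (algebraMap ℝ ℂ).injective]; exact hP
    have hdegpos : 0 < (P.map (algebraMap ℝ ℂ)).degree := by
      rw [degree_map]
      exact natDegree_pos_iff_degree_pos.mp (by omega)
    obtain ⟨z, hz⟩ := Complex.exists_root hdegpos
    have hzmem : z ∈ (P.map (algebraMap ℝ ℂ)).roots := mem_roots'.mpr ⟨hPmapne, hz⟩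
    obtain ⟨him, hre0⟩ := hroots z hzmem
    obtain ⟨r, hre, hzr⟩ : ∃ r : ℝ, 0 ≤ r ∧ z = (algebraMap ℝ ℂ) r :=
      ⟨z.re, hre0, by apply Complex.ext <;> simp [him]⟩
    have hProot : P.eval r = 0 := by
      have h0 : (algebraMap ℝ ℂ) (P.eval r) = 0 := by
        rw [← eval₂_at_apply, ← eval_map, ← hzr]
        exact hz
      exact (map_eq_zero_iff _ (algebraMap ℝ ℂ).injective).mp h0
    obtain ⟨P₁, hP₁⟩ := dvd_iff_isRoot.mpr hProot
    have hP₁ne : P₁ ≠ 0 := by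
      intro h; exact hP (by rw [hP₁, h, mul_zero])
    have hXr : (X - C r : Polynomial ℝ) ≠ 0 := X_sub_C_ne_zero r
    have hP₁deg : P₁.natDegree = n := by
      have := natDegree_mul (p := (X - C r : Polynomial ℝ)) (q := P₁) hXr hP₁ne
      rw [← hP₁, hdeg, natDegree_X_sub_C] at this
      omega
    have hQroot : Q.eval r = 0 := by
      have := hbound r hre
      rw [hProot] at this
      simp only [abs_zero, mul_zero] at this
      exact abs_eq_zero.mp (le_antisymm this (abs_nonneg _))
    obtain ⟨Q₁, hQ₁⟩ := dvd_iff_isRoot.mpr hQroot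
    have hmap : P.map (algebraMap ℝ ℂ) =
        (X - C ((algebraMap ℝ ℂ) r)) * P₁.map (algebraMap ℝ ℂ) := by
      rw [hP₁, Polynomial.map_mul, Polynomial.map_sub, Polynomial.map_X, Polynomial.map_C]
    have hroots₁ : ∀ w ∈ (P₁.map (algebraMap ℝ ℂ)).roots, w.im = 0 ∧ 0 ≤ w.re := by
      intro w hw
      apply hroots
      rw [hmap, roots_mul (by rw [← hmap]; exact hPmapne)]
      exact Multiset.mem_add.mpr (Or.inr hw)
    have hb' : ∀ t : ℝ, 0 ≤ t → t ≠ r → |Q₁.eval t| ≤ c * |P₁.eval t| := by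
      intro t ht htr
      have h1 := hbound t ht
      rw [hP₁, hQ₁] at h1
      simp only [eval_mul, eval_sub, eval_X, eval_C, abs_mul] at h1
      have habs : 0 < |t - r| := abs_pos.mpr (sub_ne_zero.mpr htr)
      have h2 : |t - r| * |Q₁.eval t| ≤ |t - r| * (c * |P₁.eval t|) := by
        calc |t - r| * |Q₁.eval t| ≤ c * (|t - r| * |P₁.eval t|) := h1
          _ = |t - r| * (c * |P₁.eval t|) := by ring
      exact le_of_mul_le_mul_left h2 habs
    have hb : ∀ t : ℝ, 0 ≤ t → |Q₁.eval t| ≤ c * |P₁.eval t| := by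
      intro t ht
      rcases eq_or_ne t r with rfl | htr
      · have hne : (nhdsWithin t (Set.Ioi t)).NeBot := nhdsGT_neBot t
        have hf : Tendsto (fun s => |Q₁.eval s|) (nhdsWithin t (Set.Ioi t))
            (nhds (|Q₁.eval t|)) :=
          (Q₁.continuous.abs.tendsto t).mono_left nhdsWithin_le_nhds
        have hg : Tendsto (fun s => c * |P₁.eval s|) (nhdsWithin t (Set.Ioi t))
            (nhds (c * |P₁.eval t|)) :=
          ((continuous_const.mul P₁.continuous.abs).tendsto t).mono_left nhdsWithin_le_nhds
        refine le_of_tendsto_of_tendsto hf hg ?_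
        filter_upwards [self_mem_nhdsWithin] with s hs
        exact hb' s (le_of_lt (lt_of_le_of_lt ht hs)) (ne_of_gt hs)
      · exact hb' t ht htr
    obtain ⟨k, hk⟩ := ih P₁ Q₁ hP₁deg hP₁ne hroots₁ c hc hb
    refine ⟨k, ?_⟩
    rw [hQ₁, hk, hP₁, mul_smul_comm]

theorem poly_dominated_by_nonneg_real_rooted {P Q : Polynomial ℝ} (hP : P ≠ 0)
    (hroots : ∀ z ∈ (P.map (algebraMap ℝ ℂ)).roots, z.im = 0 ∧ 0 ≤ z.re)
    (c : ℝ) (hc : 0 < c) (hbound : ∀ t : ℝ, 0 ≤ t → |Q.eval t| ≤ c * |P.eval t|) :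
    (∃ k : ℝ, Q = k • P) ∧ (Q.degree < P.degree → Q = 0) := by
  obtain ⟨k, hk⟩ := poly_dom_aux P.natDegree P Q rfl hP hroots c hc hbound
  refine ⟨⟨k, hk⟩, fun hlt => ?_⟩
  rcases eq_or_ne k 0 with rfl | hk0
  · rw [hk, zero_smul]
  · exfalso
    rw [hk, smul_eq_C_mul, degree_mul, degree_C hk0, zero_add] at hlt
    exact lt_irrefl _ hlt
end

section
/- Let R(t) = c·t^k·∏_{i=1}^{ℓ}(t − λ_i)² with c > 0 and λ_i > 0, normalized so that ∫_0^∞ R(t)·exp(−2t) dt = 1. If Q₁, Q₂ are real polynomials nonnegative on [0,∞) with ∫_0^∞ Q_j(t)·exp(−2t) dt = 1 and R = (Q₁ + Q₂)/2, then Q₁ = Q₂ = R. -/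
/-!
Put `E = Q₁ - R`. Since `Q₂ = 2R - Q₁` and both `Q₁`, `Q₂` are nonnegative on `[0, ∞)`, we get
`|E| ≤ R` there. Every root `x ≥ 0` of `R` is approached from the right by points of `[0, ∞)`,
so dividing by `t - x` and passing to the limit shows that `E` inherits each linear factor of
`R`, with multiplicity. Hence `E = R' * S` for the monic part `R'` of `R`, with `S` bounded on
`[0, ∞)`, i.e. constant. Thus `Q₁` is a multiple of `R`, and the normalisation pins the multiple
down to `1`.
-/

open Polynomial Finset MeasureTheory Filter

lemma le_of_forall_gt_of_continuous {f g : ℝ → ℝ} (hf : Continuous f) (hg : Continuous g)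
    {x : ℝ} (h : ∀ t, x < t → f t ≤ g t) : f x ≤ g x :=
  le_of_tendsto_of_tendsto (hf.tendsto x |>.mono_left nhdsWithin_le_nhds)
    (hg.tendsto x |>.mono_left nhdsWithin_le_nhds)
    (eventually_nhdsWithin_of_forall (s := Set.Ioi x) h)

namespace Polynomial

lemma exists_eq_X_sub_C_mul_of_abs_eval_le {E : ℝ[X]} {G : ℝ → ℝ} (hG : Continuous G)
    {x : ℝ} (hx : 0 ≤ x) (h : ∀ t, 0 ≤ t → |E.eval t| ≤ |t - x| * G t) :
    ∃ E', E = (X - C x) * E' ∧ ∀ t, 0 ≤ t → |E'.eval t| ≤ G t := by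
  have hroot : E.IsRoot x := by simpa using h x hx
  refine ⟨E /ₘ (X - C x), (mul_divByMonic_eq_iff_isRoot.mpr hroot).symm, ?_⟩
  have hoff : ∀ t, 0 ≤ t → t ≠ x → |(E /ₘ (X - C x)).eval t| ≤ G t := by
    intro t ht hne
    have hpos : 0 < |t - x| := abs_pos.mpr (sub_ne_zero.mpr hne)
    have := h t ht
    rw [← mul_divByMonic_eq_iff_isRoot.mpr hroot, eval_mul, eval_sub, eval_X, eval_C, abs_mul]
      at this
    simpa using le_of_mul_le_mul_left this hpos
  intro t ht
  rcases eq_or_ne t x with rfl | hne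
  · exact le_of_forall_gt_of_continuous (E /ₘ (X - C t)).continuous.abs hG
      fun u hu => hoff u (ht.trans hu.le) hu.ne'
  · exact hoff t ht hne

lemma exists_eq_prod_mul_of_abs_eval_le {s : Multiset ℝ} (hs : ∀ x ∈ s, 0 ≤ x) {E : ℝ[X]}
    {G : ℝ → ℝ} (hG : Continuous G)
    (h : ∀ t, 0 ≤ t → |E.eval t| ≤ |(s.map fun x => X - C x).prod.eval t| * G t) :
    ∃ E', E = (s.map fun x => X - C x).prod * E' ∧ ∀ t, 0 ≤ t → |E'.eval t| ≤ G t := by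
  induction s using Multiset.induction_on generalizing E with
  | empty => simpa using h
  | cons x s ih =>
    simp only [Multiset.map_cons, Multiset.prod_cons] at h ⊢
    obtain ⟨E₁, rfl, h₁⟩ := exists_eq_X_sub_C_mul_of_abs_eval_le
      (G := fun t => |(s.map fun x => X - C x).prod.eval t| * G t)
      ((Polynomial.continuous _).abs.mul hG) (hs x (Multiset.mem_cons_self x s)) fun t ht => by
        simpa [abs_mul, mul_assoc] using h t ht
    obtain ⟨E', rfl, h'⟩ := ih (fun y hy => hs y (Multiset.mem_cons_of_mem hy)) h₁
    exact ⟨E', by ring, h'⟩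

lemma exists_eq_C_of_abs_eval_le {p : ℝ[X]} {c : ℝ} (h : ∀ t, 0 ≤ t → |p.eval t| ≤ c) :
    ∃ a, p = C a :=
  ⟨_, eq_C_of_degree_le_zero <| (isBoundedUnder_abs_atTop_iff p).mp
    ⟨c, eventually_map.mpr <| (eventually_ge_atTop 0).mono h⟩⟩

lemma exists_eq_C_mul_prod_of_abs_eval_le {s : Multiset ℝ} (hs : ∀ x ∈ s, 0 ≤ x) {E : ℝ[X]}
    {c : ℝ} (h : ∀ t, 0 ≤ t → |E.eval t| ≤ c * |(s.map fun x => X - C x).prod.eval t|) :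
    ∃ a, E = C a * (s.map fun x => X - C x).prod := by
  obtain ⟨E', rfl, hE'⟩ := exists_eq_prod_mul_of_abs_eval_le hs continuous_const
    fun t ht => (h t ht).trans_eq (mul_comm _ _)
  obtain ⟨a, rfl⟩ := exists_eq_C_of_abs_eval_le hE'
  exact ⟨a, mul_comm _ _⟩

end Polynomial

theorem extreme_nonneg_poly_halfline_general (c : ℝ) (k ℓ : ℕ)
    (lam : Fin ℓ → ℝ) (hlam : ∀ i, 0 < lam i)
    (R : Polynomial ℝ) (hR : R = C c * X ^ k * ∏ i : Fin ℓ, (X - C (lam i)) ^ 2)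
    (hRnorm : ∫ t in Set.Ioi (0 : ℝ), R.eval t * Real.exp (-2 * t) = 1)
    (Q₁ Q₂ : Polynomial ℝ)
    (hQ₁pos : ∀ t : ℝ, 0 ≤ t → 0 ≤ Q₁.eval t)
    (hQ₂pos : ∀ t : ℝ, 0 ≤ t → 0 ≤ Q₂.eval t)
    (hQ₁norm : ∫ t in Set.Ioi (0 : ℝ), Q₁.eval t * Real.exp (-2 * t) = 1)
    (hmix : R = (1/2 : ℝ) • (Q₁ + Q₂)) :
    Q₁ = R ∧ Q₂ = R := by
  set s : Multiset ℝ := Multiset.replicate k 0 + univ.val.map lam + univ.val.map lam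
  set P : ℝ[X] := (s.map fun x => X - C x).prod
  have hs : ∀ x ∈ s, 0 ≤ x := by
    simp only [s, Multiset.mem_add, Multiset.mem_replicate, Multiset.mem_map]
    rintro x ((⟨-, rfl⟩ | ⟨i, -, rfl⟩) | ⟨i, -, rfl⟩)
    exacts [le_rfl, (hlam i).le, (hlam i).le]
  have hRP : R = C c * P := by
    rw [hR, prod_pow, pow_two]
    simp only [P, s, Multiset.map_add, Multiset.prod_add, Multiset.map_replicate,
      Multiset.prod_replicate, map_zero, sub_zero, prod_eq_multiset_prod, Multiset.map_map,
      Function.comp_def]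
    ring
  have hsum : Q₁ + Q₂ = (2 : ℝ) • R := by rw [hmix, smul_smul]; norm_num
  obtain ⟨a, ha⟩ := exists_eq_C_mul_prod_of_abs_eval_le hs (E := Q₁ - R) (c := |c|)
    fun t ht => by
      have hsum_t := congrArg (eval t) hsum
      simp only [eval_add, eval_smul, smul_eq_mul] at hsum_t
      calc |(Q₁ - R).eval t| ≤ |R.eval t| := by
            rw [eval_sub, abs_le]
            constructor <;> linarith [hQ₁pos t ht, hQ₂pos t ht, le_abs_self (R.eval t)]
        _ = |c| * |P.eval t| := by rw [hRP, eval_mul, eval_C, abs_mul]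
  have hQ₁P : Q₁ = C (c + a) * P := by rw [C_add, add_mul, ← hRP, ← ha]; ring
  have hint : ∀ b, ∫ t in Set.Ioi (0 : ℝ), (C b * P).eval t * Real.exp (-2 * t)
      = b * ∫ t in Set.Ioi (0 : ℝ), P.eval t * Real.exp (-2 * t) := fun b => by
    simp only [eval_mul, eval_C, mul_assoc]
    exact integral_const_mul _ _
  rw [hRP, hint] at hRnorm
  rw [hQ₁P, hint] at hQ₁norm
  have ha0 : a = 0 := by
    have hJ := right_ne_zero_of_mul_eq_one hRnorm
    have := (mul_left_inj' hJ).mp (hQ₁norm.trans hRnorm.symm)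
    linarith
  have hQ₁R : Q₁ = R := by rw [hQ₁P, hRP, ha0, add_zero]
  refine ⟨hQ₁R, ?_⟩
  rw [hQ₁R, two_smul] at hsum
  exact add_left_cancel hsum

theorem extreme_nonneg_poly_halfline (c : ℝ) (hc : 0 < c) (k ℓ : ℕ)
    (lam : Fin ℓ → ℝ) (hlam : ∀ i, 0 < lam i)
    (R : Polynomial ℝ) (hR : R = C c * X ^ k * ∏ i : Fin ℓ, (X - C (lam i)) ^ 2)
    (hRnorm : ∫ t in Set.Ioi (0 : ℝ), R.eval t * Real.exp (-2 * t) = 1)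
    (Q₁ Q₂ : Polynomial ℝ)
    (hQ₁pos : ∀ t : ℝ, 0 ≤ t → 0 ≤ Q₁.eval t)
    (hQ₂pos : ∀ t : ℝ, 0 ≤ t → 0 ≤ Q₂.eval t)
    (hQ₁norm : ∫ t in Set.Ioi (0 : ℝ), Q₁.eval t * Real.exp (-2 * t) = 1)
    (hQ₂norm : ∫ t in Set.Ioi (0 : ℝ), Q₂.eval t * Real.exp (-2 * t) = 1)
    (hmix : R = (1/2 : ℝ) • (Q₁ + Q₂)) :
    Q₁ = R ∧ Q₂ = R :=
  extreme_nonneg_poly_halfline_general c k ℓ lam hlam R hR hRnorm Q₁ Q₂ hQ₁pos hQ₂pos hQ₁norm hmix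
end

section
/- Every real polynomial P that is nonnegative on [0,∞) can be written as a finite convex-like combination (with positive coefficients) of polynomials of the form t^k·∏_i (t − λ_i)² with λ_i > 0; equivalently, P factors as a product of a positive constant, a power of t, squared linear factors (t − λ)² with λ > 0, linear factors (t + μ) with μ > 0, and quadratic factors (t − a)² + b² with b ≠ 0. -/
open Polynomial Finset


def Good (P : Polynomial ℝ) : Prop :=
  ∃ (N : ℕ) (a : Fin N → ℝ) (k : Fin N → ℕ) (lam : Fin N → Multiset ℝ),
    (∀ j, 0 < a j) ∧ (∀ j, ∀ l ∈ lam j, (0:ℝ) < l) ∧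
    P = ∑ j : Fin N, a j • (X ^ (k j) * ((lam j).map fun l => (X - C l) ^ 2).prod)

lemma good_zero : Good 0 :=
  ⟨0, Fin.elim0, Fin.elim0, Fin.elim0, fun j => j.elim0, fun j => j.elim0, by simp⟩

lemma good_single {a : ℝ} (ha : 0 < a) (k : ℕ) {lam : Multiset ℝ}
    (hlam : ∀ l ∈ lam, (0:ℝ) < l) :
    Good (a • (X ^ k * (lam.map fun l => (X - C l) ^ 2).prod)) :=
  ⟨1, fun _ => a, fun _ => k, fun _ => lam, fun _ => ha, fun _ => hlam, by simp⟩

lemma good_congr {P Q : Polynomial ℝ} (h : Good P) (e : P = Q) : Good Q := e ▸ h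

lemma Good.add {P Q : Polynomial ℝ} (hP : Good P) (hQ : Good Q) : Good (P + Q) := by
  obtain ⟨N, a, k, lam, ha, hlam, rfl⟩ := hP
  obtain ⟨M, b, k', lam', hb, hlam', rfl⟩ := hQ
  refine ⟨N + M, Fin.append a b, Fin.append k k', Fin.append lam lam', ?_, ?_, ?_⟩
  · intro j
    refine Fin.addCases (fun i => ?_) (fun i => ?_) j <;>
      simp [Fin.append_left, Fin.append_right] <;> [exact ha i; exact hb i]
  · intro j
    refine Fin.addCases (fun i => ?_) (fun i => ?_) j <;>
      simp [Fin.append_left, Fin.append_right] <;>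
        [exact fun l hl => hlam i l hl; exact fun l hl => hlam' i l hl]
  · rw [Fin.sum_univ_add]
    simp [Fin.append_left, Fin.append_right]

lemma Good.mul {P Q : Polynomial ℝ} (hP : Good P) (hQ : Good Q) : Good (P * Q) := by
  obtain ⟨N, a, k, lam, ha, hlam, rfl⟩ := hP
  obtain ⟨M, b, k', lam', hb, hlam', rfl⟩ := hQ
  refine ⟨N * M, fun q => a (finProdFinEquiv.symm q).1 * b (finProdFinEquiv.symm q).2,
    fun q => k (finProdFinEquiv.symm q).1 + k' (finProdFinEquiv.symm q).2,
    fun q => lam (finProdFinEquiv.symm q).1 + lam' (finProdFinEquiv.symm q).2, ?_, ?_, ?_⟩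
  · intro j; exact mul_pos (ha _) (hb _)
  · intro j l hl
    rcases Multiset.mem_add.mp hl with h | h
    · exact hlam _ _ h
    · exact hlam' _ _ h
  · rw [Finset.sum_mul_sum, ← Finset.sum_product', Finset.univ_product_univ]
    refine (Fintype.sum_equiv finProdFinEquiv.symm _ _ (fun q => ?_)).symm
    rw [smul_mul_smul_comm, pow_add, Multiset.map_add, Multiset.prod_add]
    congr 1
    ring

lemma good_C {c : ℝ} (hc : 0 < c) : Good (C c) :=
  good_congr (good_single hc 0 (lam := 0) (by simp)) (by simp [smul_eq_C_mul])

lemma good_X_pow (k : ℕ) : Good (X ^ k : Polynomial ℝ) :=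
  good_congr (good_single one_pos k (lam := 0) (by simp)) (by simp)

lemma good_sq {l : ℝ} (hl : 0 < l) : Good ((X - C l) ^ 2) :=
  good_congr (good_single one_pos 0 (lam := {l}) (by simpa using hl)) (by simp)

lemma good_lin {m : ℝ} (hm : 0 < m) : Good (X + C m) :=
  good_congr ((good_X_pow 1).add (good_C hm)) (by simp)

lemma good_smul_X {c : ℝ} (hc : 0 ≤ c) : Good (C c * X) := by
  rcases hc.lt_or_eq with h | h
  · exact good_congr (good_single h 1 (lam := 0) (by simp)) (by simp [smul_eq_C_mul])
  · exact good_congr good_zero (by simp [← h])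

lemma good_quad {a b : ℝ} (hb : b ≠ 0) : Good ((X - C a) ^ 2 + C (b ^ 2)) := by
  rcases lt_or_ge 0 a with ha | ha
  · exact (good_sq ha).add (good_C (by positivity))
  · have h1 : Good (X ^ 2 + C (-(2*a)) * X + C (a^2 + b^2)) :=
      ((good_X_pow 2).add (good_smul_X (by linarith))).add (good_C (by positivity))
    refine good_congr h1 ?_
    simp only [map_add, map_neg, map_mul, map_pow, map_ofNat]
    ring


def Fact2 (P : Polynomial ℝ) : Prop :=
  ∃ (c : ℝ) (k : ℕ) (L₁ L₂ : Multiset ℝ) (L₃ : Multiset (ℝ × ℝ)),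
    0 < c ∧ (∀ l ∈ L₁, 0 < l) ∧ (∀ m ∈ L₂, 0 < m) ∧ (∀ ab ∈ L₃, ab.2 ≠ 0) ∧
    P = C c * X ^ k * (L₁.map fun l => (X - C l) ^ 2).prod *
          (L₂.map fun m => X + C m).prod *
          (L₃.map fun ab => (X - C ab.1) ^ 2 + C (ab.2 ^ 2)).prod

lemma eval_nonneg_closure {R : Polynomial ℝ} {s : Set ℝ} {t : ℝ}
    (ht : t ∈ closure s) (h : ∀ x ∈ s, 0 ≤ R.eval x) : 0 ≤ R.eval t :=
  closure_minimal h (isClosed_le continuous_const R.continuous) ht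

lemma quot_nonneg {P Q R : Polynomial ℝ} (h : P = Q * R)
    (hpos : ∀ t : ℝ, 0 ≤ t → 0 ≤ P.eval t)
    (hQ : ∀ t : ℝ, 0 ≤ t → 0 < Q.eval t) : ∀ t : ℝ, 0 ≤ t → 0 ≤ R.eval t := by
  intro t ht
  have h1 := hpos t ht
  rw [h, eval_mul] at h1
  have h2 := hQ t ht
  by_contra hc
  push_neg at hc
  nlinarith

lemma conj_comp : (starRingEnd ℂ).comp (algebraMap ℝ ℂ) = algebraMap ℝ ℂ :=
  RingHom.ext fun x => Complex.conj_ofReal x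

lemma fact2_main : ∀ (n : ℕ) (P : Polynomial ℝ), P.natDegree ≤ n → P ≠ 0 →
    (∀ t : ℝ, 0 ≤ t → 0 ≤ P.eval t) → Fact2 P := by
  intro n
  induction n with
  | zero =>
    intro P hd hP hpos
    obtain ⟨c, rfl⟩ := natDegree_eq_zero.mp (Nat.le_zero.mp hd)
    have hc0 : c ≠ 0 := fun h => hP (by simp [h])
    have hc : 0 < c := lt_of_le_of_ne (by simpa using hpos 0 le_rfl) (Ne.symm hc0)
    exact ⟨c, 0, 0, 0, 0, hc, by simp, by simp, by simp, by simp⟩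
  | succ n ih =>
    intro P hd hP hpos
    by_cases hd0 : P.natDegree = 0
    · obtain ⟨c, rfl⟩ := natDegree_eq_zero.mp hd0
      have hc0 : c ≠ 0 := fun h => hP (by simp [h])
      have hc : 0 < c := lt_of_le_of_ne (by simpa using hpos 0 le_rfl) (Ne.symm hc0)
      exact ⟨c, 0, 0, 0, 0, hc, by simp, by simp, by simp, by simp⟩
    · have hdegC : 0 < (P.map (algebraMap ℝ ℂ)).degree := by
        rw [degree_map_eq_of_injective (algebraMap ℝ ℂ).injective]
        exact natDegree_pos_iff_degree_pos.mp (Nat.pos_of_ne_zero hd0)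
      obtain ⟨z, hz⟩ := Complex.exists_root hdegC
      by_cases him : z.im = 0
      · -- real root r = z.re
        have hroot : P.IsRoot z.re := by
          have hze : z = (z.re : ℂ) := Complex.ext rfl (by simp [him])
          have h1 : (P.map (algebraMap ℝ ℂ)).eval (algebraMap ℝ ℂ z.re)
              = algebraMap ℝ ℂ (P.eval z.re) := by
            rw [eval_map, eval₂_at_apply]
          have h2 : (algebraMap ℝ ℂ) z.re = z := by
            rw [hze]; simp
          rw [h2] at h1
          have h3 : algebraMap ℝ ℂ (P.eval z.re) = 0 := by rw [← h1]; exact hz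
          simpa using h3
        set r := z.re with hr_def
        obtain ⟨Q, hQ⟩ := dvd_iff_isRoot.mpr hroot
        have hQ0 : Q ≠ 0 := by rintro rfl; rw [mul_zero] at hQ; exact hP hQ
        have hdQ : Q.natDegree ≤ n := by
          have h1 := natDegree_mul (X_sub_C_ne_zero r) hQ0
          rw [← hQ, natDegree_X_sub_C] at h1
          omega
        rcases lt_trichotomy r 0 with hr | hr | hr
        · -- negative root
          have hQpos : ∀ t : ℝ, 0 ≤ t → 0 ≤ Q.eval t :=
            quot_nonneg hQ hpos (fun t ht => by simp only [eval_sub, eval_X, eval_C]; linarith)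
          obtain ⟨c, k, L₁, L₂, L₃, hc, h1, h2, h3, hEq⟩ := ih Q hdQ hQ0 hQpos
          refine ⟨c, k, L₁, (-r) ::ₘ L₂, L₃, hc, h1, ?_, h3, ?_⟩
          · intro m hm
            rcases Multiset.mem_cons.mp hm with h | h
            · rw [h]; linarith
            · exact h2 m h
          · rw [hQ, hEq, Multiset.map_cons, Multiset.prod_cons, map_neg, ← sub_eq_add_neg]
            ring
        · -- root at 0
          rw [hr, map_zero, sub_zero] at hQ
          have hQpos : ∀ t : ℝ, 0 ≤ t → 0 ≤ Q.eval t := by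
            have hgt : ∀ x ∈ Set.Ioi (0:ℝ), 0 ≤ Q.eval x := by
              intro x hx
              have h1 := hpos x (le_of_lt hx)
              rw [hQ, eval_mul, eval_X] at h1
              nlinarith [Set.mem_Ioi.mp hx]
            intro t ht
            rcases ht.lt_or_eq with h | h
            · exact hgt t h
            · exact eval_nonneg_closure (by rw [closure_Ioi, ← h]; exact Set.self_mem_Ici) hgt
          obtain ⟨c, k, L₁, L₂, L₃, hc, h1, h2, h3, hEq⟩ := ih Q hdQ hQ0 hQpos
          refine ⟨c, k + 1, L₁, L₂, L₃, hc, h1, h2, h3, ?_⟩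
          rw [hQ, hEq, pow_succ]
          ring
        · -- positive root: double root
          have hQr : Q.IsRoot r := by
            have hleft : ∀ x ∈ Set.Ioo (0:ℝ) r, 0 ≤ (-Q).eval x := by
              intro x hx
              have h1 := hpos x hx.1.le
              rw [hQ, eval_mul, eval_sub, eval_X, eval_C] at h1
              rw [eval_neg]
              nlinarith [hx.2]
            have hright : ∀ x ∈ Set.Ioi r, 0 ≤ Q.eval x := by
              intro x hx
              have hx' := Set.mem_Ioi.mp hx
              have h1 := hpos x (by linarith)
              rw [hQ, eval_mul, eval_sub, eval_X, eval_C] at h1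
              nlinarith
            have h1 : 0 ≤ (-Q).eval r :=
              eval_nonneg_closure (s := Set.Ioo 0 r)
                (by rw [closure_Ioo hr.ne]; exact Set.right_mem_Icc.mpr hr.le) hleft
            have h2 : 0 ≤ Q.eval r :=
              eval_nonneg_closure (s := Set.Ioi r)
                (by rw [closure_Ioi]; exact Set.self_mem_Ici) hright
            rw [eval_neg] at h1
            exact le_antisymm (by linarith) h2
          obtain ⟨R, hR⟩ := dvd_iff_isRoot.mpr hQr
          have hPR : P = (X - C r) ^ 2 * R := by rw [hQ, hR]; ring
          have hR0 : R ≠ 0 := by rintro rfl; rw [mul_zero] at hPR; exact hP hPR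
          have hdR : R.natDegree ≤ n := by
            have h1 := natDegree_mul (pow_ne_zero 2 (X_sub_C_ne_zero r)) hR0
            rw [← hPR, natDegree_pow, natDegree_X_sub_C] at h1
            omega
          have hRpos : ∀ t : ℝ, 0 ≤ t → 0 ≤ R.eval t := by
            have hgt : ∀ x ∈ Set.Ioi r, 0 ≤ R.eval x := by
              intro x hx
              have hx' := Set.mem_Ioi.mp hx
              have h1 := hpos x (by linarith)
              rw [hPR, eval_mul, eval_pow, eval_sub, eval_X, eval_C] at h1
              have hne : x - r ≠ 0 := sub_ne_zero.mpr (ne_of_gt hx')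
              have h2 : 0 < (x - r) ^ 2 := by positivity
              nlinarith
            intro t ht
            rcases eq_or_ne t r with h | h
            · exact eval_nonneg_closure (by rw [closure_Ioi, h]; exact Set.self_mem_Ici) hgt
            · have h1 := hpos t ht
              rw [hPR, eval_mul, eval_pow, eval_sub, eval_X, eval_C] at h1
              have hne : t - r ≠ 0 := sub_ne_zero.mpr h
              have h2 : 0 < (t - r) ^ 2 := by positivity
              nlinarith
          obtain ⟨c, k, L₁, L₂, L₃, hc, h1, h2, h3, hEq⟩ := ih R hdR hR0 hRpos
          refine ⟨c, k, r ::ₘ L₁, L₂, L₃, hc, ?_, h2, h3, ?_⟩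
          · intro l hl
            rcases Multiset.mem_cons.mp hl with h | h
            · rw [h]; exact hr
            · exact h1 l h
          · rw [hPR, hEq, Multiset.map_cons, Multiset.prod_cons]
            ring
      · -- complex root, quadratic factor
        set a := z.re with ha_def
        set b := z.im with hb_def
        have hconj : (P.map (algebraMap ℝ ℂ)).IsRoot (starRingEnd ℂ z) := by
          have h1 : (P.map (algebraMap ℝ ℂ)).eval (starRingEnd ℂ z)
              = starRingEnd ℂ ((P.map (algebraMap ℝ ℂ)).eval z) := by
            rw [eval_map, eval_map, hom_eval₂, conj_comp]
          rw [IsRoot.def, h1, hz.eq_zero, map_zero]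
        have hne : z ≠ starRingEnd ℂ z := fun h => him (Complex.conj_eq_iff_im.mp h.symm)
        obtain ⟨Q1, hQ1⟩ := dvd_iff_isRoot.mpr hz
        have hQ1root : Q1.IsRoot (starRingEnd ℂ z) := by
          have h1 := hconj
          rw [IsRoot.def, hQ1, eval_mul, eval_sub, eval_X, eval_C] at h1
          rcases mul_eq_zero.mp h1 with h | h
          · exact absurd (sub_eq_zero.mp h).symm hne
          · exact h
        obtain ⟨Q2, hQ2⟩ := dvd_iff_isRoot.mpr hQ1root
        have hdvdC : (X - C z) * (X - C (starRingEnd ℂ z)) ∣ P.map (algebraMap ℝ ℂ) :=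
          ⟨Q2, by rw [hQ1, hQ2]; ring⟩
        set q : Polynomial ℝ := (X - C a) ^ 2 + C (b ^ 2) with hq_def
        have hqm : q.Monic := by
          apply Polynomial.Monic.add_of_left ((monic_X_sub_C a).pow 2)
          rw [degree_pow, degree_X_sub_C]
          exact lt_of_le_of_lt degree_C_le (by norm_num)
        have hqmap : q.map (algebraMap ℝ ℂ) = (X - C z) * (X - C (starRingEnd ℂ z)) := by
          have h1 : C z + C (starRingEnd ℂ z) = 2 * C ((a : ℂ)) := by
            rw [← map_add, Complex.add_conj]
            push_cast
            rw [map_mul, map_ofNat]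
          have h2 : C z * C (starRingEnd ℂ z) = C ((a : ℂ)) ^ 2 + C ((b : ℂ)) ^ 2 := by
            rw [← map_mul, Complex.mul_conj]
            rw [Complex.normSq_apply]
            push_cast
            rw [map_add, map_mul, map_mul]
            ring
          have h3 : q.map (algebraMap ℝ ℂ) = (X - C ((a:ℂ))) ^ 2 + C ((b:ℂ)) ^ 2 := by
            simp [hq_def]
          rw [h3]
          linear_combination (X : Polynomial ℂ) * h1 - h2
        have hqdvd : q ∣ P := by
          rw [← map_dvd_map (algebraMap ℝ ℂ) (algebraMap ℝ ℂ).injective hqm, hqmap]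
          exact hdvdC
        obtain ⟨R, hR⟩ := hqdvd
        have hR0 : R ≠ 0 := by rintro rfl; rw [mul_zero] at hR; exact hP hR
        have hq0 : q ≠ 0 := hqm.ne_zero
        have hqdeg : q.natDegree = 2 := by
          rw [hq_def]
          compute_degree!
        have hdR : R.natDegree ≤ n := by
          have h1 := natDegree_mul hq0 hR0
          rw [← hR, hqdeg] at h1
          omega
        have hqpos : ∀ t : ℝ, 0 ≤ t → 0 < q.eval t := by
          intro t _
          rw [hq_def]
          simp only [eval_add, eval_pow, eval_sub, eval_X, eval_C]
          positivity
        have hRpos : ∀ t : ℝ, 0 ≤ t → 0 ≤ R.eval t := quot_nonneg hR hpos hqpos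
        obtain ⟨c, k, L₁, L₂, L₃, hc, h1, h2, h3, hEq⟩ := ih R hdR hR0 hRpos
        refine ⟨c, k, L₁, L₂, (a, b) ::ₘ L₃, hc, h1, h2, ?_, ?_⟩
        · intro ab hab
          rcases Multiset.mem_cons.mp hab with h | h
          · rw [h]; exact him
          · exact h3 ab h
        · rw [hR, hEq, Multiset.map_cons, Multiset.prod_cons, hq_def]
          ring

lemma good_msprod {α : Type*} (s : Multiset α) (f : α → Polynomial ℝ)
    (h : ∀ x ∈ s, Good (f x)) : Good ((s.map f).prod) := by
  induction s using Multiset.induction with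
  | empty => exact good_congr (good_X_pow 0) (by simp)
  | cons x s ihs =>
    rw [Multiset.map_cons, Multiset.prod_cons]
    exact (h x (Multiset.mem_cons_self x s)).mul
      (ihs fun y hy => h y (Multiset.mem_cons_of_mem hy))


/-- Every real polynomial nonnegative on `[0, ∞)` is a finite combination with positive
coefficients of polynomials of the form `t^k ∏ᵢ (t - λᵢ)²` with `λᵢ > 0`; equivalently,
it factors as a product of a positive constant, a power of `t`, squared linear factors
`(t - λ)²` with `λ > 0`, linear factors `(t + μ)` with `μ > 0`, and quadratic factors
`(t - a)² + b²` with `b ≠ 0`. -/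
theorem nonneg_poly_halfline_decomposition (P : Polynomial ℝ) (hP : P ≠ 0)
    (hpos : ∀ t : ℝ, 0 ≤ t → 0 ≤ P.eval t) :
    (∃ (N : ℕ) (a : Fin N → ℝ) (k : Fin N → ℕ) (lam : Fin N → Multiset ℝ),
      (∀ j, 0 < a j) ∧ (∀ j, ∀ l ∈ lam j, (0:ℝ) < l) ∧
      P = ∑ j : Fin N, a j • (X ^ (k j) * ((lam j).map fun l => (X - C l) ^ 2).prod)) ∧
    (∃ (c : ℝ) (k : ℕ) (L₁ L₂ : Multiset ℝ) (L₃ : Multiset (ℝ × ℝ)),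
      0 < c ∧ (∀ l ∈ L₁, 0 < l) ∧ (∀ m ∈ L₂, 0 < m) ∧ (∀ ab ∈ L₃, ab.2 ≠ 0) ∧
      P = C c * X ^ k * (L₁.map fun l => (X - C l) ^ 2).prod *
            (L₂.map fun m => X + C m).prod *
            (L₃.map fun ab => (X - C ab.1) ^ 2 + C (ab.2 ^ 2)).prod) := by
  have hf : Fact2 P := fact2_main P.natDegree P le_rfl hP hpos
  obtain ⟨c, k, L₁, L₂, L₃, hc, h1, h2, h3, hEq⟩ := hf
  constructor
  · have hg : Good P := by
      refine good_congr ?_ hEq.symm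
      refine ((((good_C hc).mul (good_X_pow k)).mul ?_).mul ?_).mul ?_
      · exact good_msprod _ _ fun l hl => good_sq (h1 l hl)
      · exact good_msprod _ _ fun m hm => good_lin (h2 m hm)
      · exact good_msprod _ _ fun ab hab => good_quad (h3 ab hab)
    exact hg
  · exact ⟨c, k, L₁, L₂, L₃, hc, h1, h2, h3, hEq⟩
end

section
/- For λ, x real and n ∈ ℕ, the generalized Laguerre polynomials satisfy the rescaling identity L_n^{(a)}(λx) = (1−λ)^n Σ_{k=0}^n C(n+a, n−k) (λ/(1−λ))^k L_k^{(a)}(x) for λ ≠ 1, where C denotes the binomial coefficient. -/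
/-!
Multiplying out `(1 - λ)^n (λ/(1-λ))^k = λ^k (1-λ)^(n-k)`, the right-hand side becomes
`Σ_k Σ_{j ≤ k} C(n+a, n-k) C(k+a, k-j) λ^k (1-λ)^(n-k) (-1)^j x^j / j!`. After exchanging the
sums, the trinomial revision `C(n+a, n-k) C(k+a, k-j) = C(n+a, n-j) C(n-j, k-j)` turns the inner
sum over `k` into `C(n+a, n-j)` times the binomial expansion of `λ^j (λ + (1 - λ))^(n-j) = λ^j`,
which is the coefficient of `x^j` in `L_n^{(a)}(λ x)`.
-/

open Finset

/-- Generalized Laguerre polynomial `L_n^{(a)}(x) = Σ_{k=0}^n (-1)^k C(n+a, n-k) x^k / k!`. -/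
noncomputable def laguerre (a n : ℕ) (x : ℝ) : ℝ :=
  ∑ k ∈ range (n + 1),
    (-1) ^ k * (Nat.choose (n + a) (n - k) : ℝ) * x ^ k / (Nat.factorial k : ℝ)

theorem Nat.choose_add_sub_mul_choose_add_sub {a n j k : ℕ} (hjk : j ≤ k) (hkn : k ≤ n) :
    (n + a).choose (n - k) * (k + a).choose (k - j)
      = (n + a).choose (n - j) * (n - j).choose (k - j) := by
  rw [Nat.choose_symm_of_eq_add (show n + a = (n - k) + (k + a) by omega),
    Nat.choose_symm_of_eq_add (show k + a = (k - j) + (j + a) by omega),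
    Nat.choose_symm_of_eq_add (show n + a = (n - j) + (j + a) by omega),
    Nat.choose_mul (by omega)]
  congr 2 <;> omega

theorem sum_Ico_choose_mul_pow_mul_one_sub_pow {R : Type*} [CommRing R] (lam : R) {j n : ℕ}
    (hj : j ≤ n) :
    ∑ k ∈ Ico j (n + 1), ((n - j).choose (k - j) : R) * (lam ^ k * (1 - lam) ^ (n - k))
      = lam ^ j := by
  have hshift : ∀ m ∈ range (n - j + 1),
      ((n - j).choose (j + m - j) : R) * (lam ^ (j + m) * (1 - lam) ^ (n - (j + m)))
        = lam ^ j * (lam ^ m * (1 - lam) ^ (n - j - m) * ((n - j).choose m : R)) := by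
    intro m _
    rw [Nat.add_sub_cancel_left, Nat.sub_sub, pow_add]
    ring
  rw [sum_Ico_eq_sum_range, show n + 1 - j = n - j + 1 by omega, sum_congr rfl hshift,
    ← mul_sum, ← add_pow, add_sub_cancel, one_pow, mul_one]

theorem pow_mul_div_pow_of_le {K : Type*} [Field K] {c : K} (hc : c ≠ 0) (lam : K) {k n : ℕ}
    (hkn : k ≤ n) : c ^ n * (lam / c) ^ k = lam ^ k * c ^ (n - k) := by
  rw [div_pow, ← pow_sub_mul_pow c hkn]
  field_simp

theorem laguerre_mul_eq_sum (a n : ℕ) (lam x : ℝ) :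
    laguerre a n (lam * x)
      = ∑ k ∈ range (n + 1),
          (n + a).choose (n - k) * (lam ^ k * (1 - lam) ^ (n - k)) * laguerre a k x := by
  simp only [laguerre, mul_sum]
  rw [sum_comm' (t' := range (n + 1)) (s' := fun j => Ico j (n + 1))
    (fun k j => by simp only [mem_range, mem_Ico]; omega)]
  refine sum_congr rfl fun j hj => ?_
  have hjn : j ≤ n := Nat.lt_succ_iff.mp (mem_range.mp hj)
  calc (-1) ^ j * ((n + a).choose (n - j) : ℝ) * (lam * x) ^ j / j.factorial
      = (-1) ^ j * (n + a).choose (n - j) * x ^ j / j.factorial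
          * ∑ k ∈ Ico j (n + 1), ((n - j).choose (k - j) : ℝ) * (lam ^ k * (1 - lam) ^ (n - k)) := by
        rw [sum_Ico_choose_mul_pow_mul_one_sub_pow lam hjn, mul_pow]
        ring
    _ = _ := by
        rw [mul_sum]
        refine sum_congr rfl fun k hk => ?_
        obtain ⟨hjk, hkn⟩ := mem_Ico.mp hk
        have hrev : ((n + a).choose (n - k) * (k + a).choose (k - j) : ℝ)
            = (n + a).choose (n - j) * (n - j).choose (k - j) := by
          exact_mod_cast Nat.choose_add_sub_mul_choose_add_sub hjk (Nat.lt_succ_iff.mp hkn)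
        linear_combination
          ((-1) ^ j * x ^ j / j.factorial * (lam ^ k * (1 - lam) ^ (n - k))) * hrev.symm

/-- Rescaling identity for generalized Laguerre polynomials. -/
theorem laguerre_rescaling (a n : ℕ) (lam x : ℝ) (hlam : lam ≠ 1) :
    laguerre a n (lam * x)
      = (1 - lam) ^ n * ∑ k ∈ range (n + 1),
          (Nat.choose (n + a) (n - k) : ℝ) * (lam / (1 - lam)) ^ k * laguerre a k x := by
  have hc : (1 : ℝ) - lam ≠ 0 := sub_ne_zero.mpr hlam.symm
  rw [laguerre_mul_eq_sum, mul_sum]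
  refine sum_congr rfl fun k hk => ?_
  rw [← pow_mul_div_pow_of_le hc lam (Nat.lt_succ_iff.mp (mem_range.mp hk))]
  ring
end
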